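/- arXiv:2604.26746 — 3 statements merged into one kernel-verified Lean document; each statement's English description precedes it below -/
import Mathlib

section
/- Let F : ℝⁿ → ℝⁿ be monotone, Ω nonempty closed convex, φ differentiable and μ-strongly convex. Suppose x_β ∈ Ω solves VI(F + β∇φ, Ω) for some β > 0, and x* ∈ SOL(F, Ω) is the minimizer of φ over SOL(F, Ω). Then ‖x_β - x*‖ ≤ ‖∇φ(x*)‖/μ, uniformly in β. -/
open scoped RealInnerProductSpace

/-- First-order condition for a convex differentiable function. -/
lemma convex_first_order {E : Type*} [NormedAddCommGroup E] [InnerProductSpace ℝ E]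
    [CompleteSpace E]
    (g : E → ℝ) (G : E → E) (hg : ConvexOn ℝ Set.univ g)
    (hG : ∀ x, HasGradientAt g (G x) x) (x y : E) :
    ⟪G y, x - y⟫ ≤ g x - g y := by
  set h : ℝ → ℝ := fun t => g (y + t • (x - y)) with hh
  have hline : ∀ t : ℝ, HasDerivAt (fun t : ℝ => y + t • (x - y)) (x - y) t := by
    intro t
    simpa using ((hasDerivAt_id t).smul_const (x - y)).const_add y
  have hderiv : ∀ t : ℝ, HasDerivAt h ⟪G (y + t • (x - y)), x - y⟫ t := by
    intro t
    have hf : HasFDerivAt g (InnerProductSpace.toDual ℝ E (G (y + t • (x - y))))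
        (y + t • (x - y)) := (hG _)
    have hc := hf.comp_hasDerivAt t (hline t)
    simp at hc
    exact hc
  have hconv : ConvexOn ℝ Set.univ h := by
    have := hg.comp_affineMap (AffineMap.lineMap y x : ℝ →ᵃ[ℝ] E)
    have heq : (g ∘ (AffineMap.lineMap y x : ℝ →ᵃ[ℝ] E)) = h := by
      funext t
      simp [hh, AffineMap.lineMap_apply, add_comm]
    rw [heq] at this
    simpa using this
  have hslope := hconv.le_slope_of_hasDerivAt (Set.mem_univ (0 : ℝ))
    (Set.mem_univ (1 : ℝ)) one_pos (by simpa using hderiv 0)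
  have h0 : h 0 = g y := by simp [hh]
  have h1 : h 1 = g x := by simp [hh]
  simpa [slope, h0, h1] using hslope

theorem tikhonov_uniform_bound (n : ℕ) (μ β : ℝ) (hμ : 0 < μ) (hβ : 0 < β)
    (F : EuclideanSpace ℝ (Fin n) → EuclideanSpace ℝ (Fin n))
    (φ : EuclideanSpace ℝ (Fin n) → ℝ)
    (gradφ : EuclideanSpace ℝ (Fin n) → EuclideanSpace ℝ (Fin n))
    (Ω : Set (EuclideanSpace ℝ (Fin n)))
    (hne : Ω.Nonempty) (hclosed : IsClosed Ω) (hconv : Convex ℝ Ω)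
    (hmono : ∀ x ∈ Ω, ∀ y ∈ Ω, 0 ≤ ⟪F x - F y, x - y⟫)
    (hφ : StrongConvexOn Set.univ μ φ)
    (hgrad : ∀ x, HasGradientAt φ (gradφ x) x)
    (xβ xstar : EuclideanSpace ℝ (Fin n))
    (hxβΩ : xβ ∈ Ω)
    (hxβ : ∀ z ∈ Ω, 0 ≤ ⟪F xβ + β • gradφ xβ, z - xβ⟫)
    (hxstarSOL : xstar ∈ Ω ∧ ∀ z ∈ Ω, 0 ≤ ⟪F xstar, z - xstar⟫)
    (hxstarMin : ∀ z, z ∈ Ω → (∀ w ∈ Ω, 0 ≤ ⟪F z, w - z⟫) → φ xstar ≤ φ z) :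
    ‖xβ - xstar‖ ≤ ‖gradφ xstar‖ / μ := by
  set g : EuclideanSpace ℝ (Fin n) → ℝ := fun z => φ z - μ / 2 * ‖z‖ ^ 2 with hgdef
  set G : EuclideanSpace ℝ (Fin n) → EuclideanSpace ℝ (Fin n) :=
    fun z => gradφ z - μ • z with hGdef
  have hgconv : ConvexOn ℝ Set.univ g := strongConvexOn_iff_convex.mp hφ
  have hG : ∀ z, HasGradientAt g (G z) z := by
    intro z
    have h1 : HasFDerivAt (fun z : EuclideanSpace ℝ (Fin n) => ‖z‖ ^ 2)
        (2 • (innerSL ℝ z)) z := (hasStrictFDerivAt_norm_sq z).hasFDerivAt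
    have h2 : HasFDerivAt (fun z : EuclideanSpace ℝ (Fin n) => μ / 2 * ‖z‖ ^ 2)
        ((μ / 2) • (2 • (innerSL ℝ z))) z := h1.const_mul (μ / 2)
    have h3 : HasFDerivAt g
        (InnerProductSpace.toDual ℝ _ (gradφ z) - (μ / 2) • (2 • (innerSL ℝ z))) z :=
      HasFDerivAt.sub (hgrad z) h2
    have heq : (InnerProductSpace.toDual ℝ _ (gradφ z) - (μ / 2) • (2 • (innerSL ℝ z)))
        = InnerProductSpace.toDual ℝ _ (G z) := by
      ext v
      simp [hGdef, inner_sub_left, real_inner_smul_left]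
      ring
    rw [heq] at h3
    exact h3
  set d : EuclideanSpace ℝ (Fin n) := xβ - xstar with hd
  have hds : xstar - xβ = -d := by rw [hd]; abel
  -- strong monotonicity of gradφ
  have hfo1 := convex_first_order g G hgconv hG xβ xstar
  have hfo2 := convex_first_order g G hgconv hG xstar xβ
  rw [hds, inner_neg_right] at hfo2
  have hGmono : 0 ≤ ⟪G xβ - G xstar, d⟫ := by
    rw [inner_sub_left]; linarith
  have hGexp : ⟪G xβ - G xstar, d⟫ = ⟪gradφ xβ - gradφ xstar, d⟫ - μ * ‖d‖ ^ 2 := by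
    have e : G xβ - G xstar = (gradφ xβ - gradφ xstar) - μ • d := by
      simp only [hGdef, hd]; module
    rw [e, inner_sub_left, real_inner_smul_left, real_inner_self_eq_norm_sq]
  have hstrong : μ * ‖d‖ ^ 2 ≤ ⟪gradφ xβ - gradφ xstar, d⟫ := by
    rw [hGexp] at hGmono; linarith
  -- VI part: ⟪gradφ xβ, d⟫ ≤ 0
  have hv1 := hxβ xstar hxstarSOL.1
  have hv2 := hxstarSOL.2 xβ hxβΩ
  have hv3 := hmono xβ hxβΩ xstar hxstarSOL.1
  rw [hds, inner_add_left, real_inner_smul_left, inner_neg_right, inner_neg_right] at hv1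
  rw [inner_sub_left] at hv3
  have hkey : ⟪gradφ xβ, d⟫ ≤ 0 := by nlinarith [hβ.le]
  -- combine
  have hsub : ⟪gradφ xβ - gradφ xstar, d⟫ = ⟪gradφ xβ, d⟫ - ⟪gradφ xstar, d⟫ :=
    inner_sub_left _ _ _
  have h5 : -⟪gradφ xstar, d⟫ ≤ ‖gradφ xstar‖ * ‖d‖ := by
    have h6 := abs_real_inner_le_norm (gradφ xstar) d
    have h7 := neg_abs_le ⟪gradφ xstar, d⟫
    linarith
  have hfinal : μ * ‖d‖ ^ 2 ≤ ‖gradφ xstar‖ * ‖d‖ := by linarith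
  rcases eq_or_lt_of_le (norm_nonneg d) with h0 | h0
  · rw [← h0]; positivity
  · rw [le_div_iff₀ hμ]; nlinarith
end

section
/- Let η > 0 and ε ≠ 1, and consider the iteration y_{k+1} = y_k - η(2y_k(1 - x_k) + x_k(1 - ε)). If (x_k) is the 2-periodic sequence alternating between two distinct values a, b ∈ ℝ \ {1} with -a(1-ε)/(2(1-a)) ≠ -b(1-ε)/(2(1-b)), then the sequence (y_k) does not converge. -/
open Filter

theorem oscillation_prevents_convergence (η ε a b : ℝ) (hη : 0 < η) (hε : ε ≠ 1)
    (ha : a ≠ 1) (hb : b ≠ 1) (hab : a ≠ b)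
    (hfix : -(a * (1 - ε)) / (2 * (1 - a)) ≠ -(b * (1 - ε)) / (2 * (1 - b)))
    (x : ℕ → ℝ) (hx : ∀ k, x k = if Even k then a else b)
    (y : ℕ → ℝ)
    (hupd : ∀ k, y (k + 1) = y k - η * (2 * y k * (1 - x k) + x k * (1 - ε))) :
    ¬∃ yinf : ℝ, Tendsto y atTop (nhds yinf) := by
  rintro ⟨L, hL⟩
  have h2n : Tendsto (fun k : ℕ => 2 * k) atTop atTop :=
    tendsto_atTop_mono (fun n => by simp only [id_eq]; omega) tendsto_id
  have h2n1 : Tendsto (fun k : ℕ => 2 * k + 1) atTop atTop :=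
    tendsto_atTop_mono (fun n => by simp only [id_eq]; omega) tendsto_id
  have h2n2 : Tendsto (fun k : ℕ => 2 * k + 2) atTop atTop :=
    tendsto_atTop_mono (fun n => by simp only [id_eq]; omega) tendsto_id
  have hE : Tendsto (fun k => y (2 * k)) atTop (nhds L) := hL.comp h2n
  have hO : Tendsto (fun k => y (2 * k + 1)) atTop (nhds L) := hL.comp h2n1
  have hE2 : Tendsto (fun k => y (2 * k + 2)) atTop (nhds L) := hL.comp h2n2
  have hηne : η ≠ 0 := ne_of_gt hη
  -- even step
  have keyA : 2 * L * (1 - a) + a * (1 - ε) = 0 := by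
    have hdiff : ∀ k, y (2 * k + 1) - y (2 * k)
        = -(η * (2 * y (2 * k) * (1 - a) + a * (1 - ε))) := by
      intro k
      have hxk : x (2 * k) = a := by rw [hx]; simp [Nat.even_mul]
      rw [hupd, hxk]; ring
    have t1 : Tendsto (fun k => y (2 * k + 1) - y (2 * k)) atTop (nhds 0) := by
      simpa using hO.sub hE
    have t2 : Tendsto (fun k => y (2 * k + 1) - y (2 * k)) atTop
        (nhds (-(η * (2 * L * (1 - a) + a * (1 - ε))))) := by
      simp only [hdiff]
      exact (((hE.const_mul 2).mul_const (1 - a)).add tendsto_const_nhds).const_mul η |>.neg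
    have := tendsto_nhds_unique t1 t2
    have : η * (2 * L * (1 - a) + a * (1 - ε)) = 0 := by linarith
    exact (mul_eq_zero.1 this).resolve_left hηne
  have keyB : 2 * L * (1 - b) + b * (1 - ε) = 0 := by
    have hdiff : ∀ k, y (2 * k + 2) - y (2 * k + 1)
        = -(η * (2 * y (2 * k + 1) * (1 - b) + b * (1 - ε))) := by
      intro k
      have hxk : x (2 * k + 1) = b := by
        rw [hx]; simp [Nat.even_add_one, Nat.even_mul]
      rw [show 2 * k + 2 = (2 * k + 1) + 1 from rfl, hupd, hxk]; ring
    have t1 : Tendsto (fun k => y (2 * k + 2) - y (2 * k + 1)) atTop (nhds 0) := by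
      simpa using hE2.sub hO
    have t2 : Tendsto (fun k => y (2 * k + 2) - y (2 * k + 1)) atTop
        (nhds (-(η * (2 * L * (1 - b) + b * (1 - ε))))) := by
      simp only [hdiff]
      exact (((hO.const_mul 2).mul_const (1 - b)).add tendsto_const_nhds).const_mul η |>.neg
    have := tendsto_nhds_unique t1 t2
    have : η * (2 * L * (1 - b) + b * (1 - ε)) = 0 := by linarith
    exact (mul_eq_zero.1 this).resolve_left hηne
  have h1a : (1 : ℝ) - a ≠ 0 := sub_ne_zero.2 (fun h => ha h.symm)
  have h1b : (1 : ℝ) - b ≠ 0 := sub_ne_zero.2 (fun h => hb h.symm)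
  apply hfix
  have La : L = -(a * (1 - ε)) / (2 * (1 - a)) := by
    field_simp
    linarith
  have Lb : L = -(b * (1 - ε)) / (2 * (1 - b)) := by
    field_simp
    linarith
  rw [← La, ← Lb]
end

section
/- Let F : ℝⁿ → ℝⁿ be monotone and continuous, Ω nonempty compact convex, φ differentiable μ-strongly convex, and for each β > 0 let x_β ∈ Ω denote the unique solution of VI(F + β∇φ, Ω). Then every limit point of (x_{β_j}) along any sequence β_j → 0⁺ belongs to SOL(F, Ω). -/
open Filter
open scoped RealInnerProductSpace

theorem tikhonov_limit_points_solve_vi (n : ℕ) (μ : ℝ) (hμ : 0 < μ)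
    (F : EuclideanSpace ℝ (Fin n) → EuclideanSpace ℝ (Fin n))
    (φ : EuclideanSpace ℝ (Fin n) → ℝ)
    (gradφ : EuclideanSpace ℝ (Fin n) → EuclideanSpace ℝ (Fin n))
    (Ω : Set (EuclideanSpace ℝ (Fin n)))
    (hΩne : Ω.Nonempty) (hΩcpt : IsCompact Ω) (hΩconv : Convex ℝ Ω)
    (hFcont : Continuous F)
    (hmono : ∀ x ∈ Ω, ∀ y ∈ Ω, 0 ≤ ⟪F x - F y, x - y⟫)
    (hφ : StrongConvexOn Set.univ μ φ)
    (hgrad : ∀ x, HasGradientAt φ (gradφ x) x)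
    (hgradcont : Continuous gradφ)
    (β : ℕ → ℝ) (hβpos : ∀ j, 0 < β j) (hβ : Tendsto β atTop (nhds 0))
    (xβ : ℕ → EuclideanSpace ℝ (Fin n))
    (hxβΩ : ∀ j, xβ j ∈ Ω)
    (hxβ : ∀ j, ∀ z ∈ Ω, 0 ≤ ⟪F (xβ j) + β j • gradφ (xβ j), z - xβ j⟫)
    (σ : ℕ → ℕ) (hσ : StrictMono σ)
    (xbar : EuclideanSpace ℝ (Fin n))
    (hlim : Tendsto (fun j => xβ (σ j)) atTop (nhds xbar)) :
    xbar ∈ Ω ∧ ∀ z ∈ Ω, 0 ≤ ⟪F xbar, z - xbar⟫ := by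
  have hβσ : Tendsto (fun j => β (σ j)) atTop (nhds 0) := hβ.comp hσ.tendsto_atTop
  have hxmem : xbar ∈ Ω :=
    hΩcpt.isClosed.mem_of_tendsto hlim (Eventually.of_forall fun j => hxβΩ (σ j))
  refine ⟨hxmem, ?_⟩
  -- Step 1 (Minty, forward): for every z ∈ Ω, ⟪F z, z - xbar⟫ ≥ 0
  have key : ∀ z ∈ Ω, 0 ≤ ⟪F z, z - xbar⟫ := by
    intro z hz
    have h1 : ∀ j, 0 ≤ ⟪F z, z - xβ (σ j)⟫ + β (σ j) * ⟪gradφ (xβ (σ j)), z - xβ (σ j)⟫ := by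
      intro j
      have hvi := hxβ (σ j) z hz
      rw [inner_add_left, real_inner_smul_left] at hvi
      have hmon := hmono z hz (xβ (σ j)) (hxβΩ (σ j))
      rw [inner_sub_left] at hmon
      linarith
    have t1 : Tendsto (fun j => ⟪F z, z - xβ (σ j)⟫) atTop (nhds ⟪F z, z - xbar⟫) :=
      tendsto_const_nhds.inner (tendsto_const_nhds.sub hlim)
    have t2 : Tendsto (fun j => ⟪gradφ (xβ (σ j)), z - xβ (σ j)⟫) atTop
        (nhds ⟪gradφ xbar, z - xbar⟫) :=
      ((hgradcont.tendsto xbar).comp hlim).inner (tendsto_const_nhds.sub hlim)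
    have t3 : Tendsto
        (fun j => ⟪F z, z - xβ (σ j)⟫ + β (σ j) * ⟪gradφ (xβ (σ j)), z - xβ (σ j)⟫)
        atTop (nhds (⟪F z, z - xbar⟫ + 0 * ⟪gradφ xbar, z - xbar⟫)) :=
      t1.add (hβσ.mul t2)
    rw [zero_mul, add_zero] at t3
    exact ge_of_tendsto t3 (Eventually.of_forall h1)
  -- Step 2 (Minty, backward): take z_t on the segment from xbar to z and let t → 0
  intro z hz
  set t : ℕ → ℝ := fun k => 1 / ((k : ℝ) + 1) with ht
  have htpos : ∀ k, 0 < t k := fun k => by positivity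
  have hzt : ∀ k : ℕ, (xbar + t k • (z - xbar)) ∈ Ω := by
    intro k
    have ht1 : t k ≤ 1 := by
      rw [ht]
      rw [div_le_one (by positivity)]
      have : (0:ℝ) ≤ (k : ℝ) := Nat.cast_nonneg k
      linarith
    have := hΩconv hxmem hz (a := 1 - t k) (b := t k) (by linarith) (htpos k).le (by ring)
    convert this using 1
    module
  have hk : ∀ k, 0 ≤ ⟪F (xbar + t k • (z - xbar)), z - xbar⟫ := by
    intro k
    have := key _ (hzt k)
    have heq : xbar + t k • (z - xbar) - xbar = t k • (z - xbar) := by abel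
    rw [heq, real_inner_smul_right] at this
    exact nonneg_of_mul_nonneg_right this (htpos k)
  have htlim : Tendsto t atTop (nhds 0) := tendsto_one_div_add_atTop_nhds_zero_nat
  have hzlim : Tendsto (fun k => xbar + t k • (z - xbar)) atTop (nhds xbar) := by
    have : Tendsto (fun k => xbar + t k • (z - xbar)) atTop
        (nhds (xbar + (0:ℝ) • (z - xbar))) :=
      tendsto_const_nhds.add (htlim.smul tendsto_const_nhds)
    simpa using this
  have tfin : Tendsto (fun k => ⟪F (xbar + t k • (z - xbar)), z - xbar⟫) atTop
      (nhds ⟪F xbar, z - xbar⟫) :=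
    ((hFcont.tendsto xbar).comp hzlim).inner tendsto_const_nhds
  exact ge_of_tendsto tfin (Eventually.of_forall hk)
end
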